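/- Let A: \partial\Delta \to GL(N,\mathbb{C}) be continuous and suppose (\Phi^+, \Phi^-) and (\Psi^+, \Psi^-) are two canonical systems for A, with partial indices (k_1 \ge ... \ge k_N) and (l_1 \ge ... \ge l_N) respectively (each arranged in decreasing order). Then k_i = l_i for all i; i.e., the partial indices of A are independent of the canonical system chosen, up to reordering. In particular the total index k = \sum k_i is an invariant of A. -/

import Mathlib

open Metric

/-- Order at infinity: `h(z) = z^{-k} g(1/z)` with `g` holomorphic near `0`, `g(0) ≠ 0`. -/
def HasOrderAtInfty {E : Type*} [NormedAddCommGroup E] [NormedSpace ℂ E]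
    (h : ℂ → E) (k : ℤ) : Prop :=
  ∃ r > (0 : ℝ), ∃ g : ℂ → E, DifferentiableOn ℂ g (ball 0 r) ∧ g 0 ≠ 0 ∧
    ∀ z : ℂ, r⁻¹ < ‖z‖ → h z = (z ^ (-k) : ℂ) • g z⁻¹

/-- `(Φ⁺, Φ⁻)` is a canonical system for `A` with partial indices `k`. -/
def CanonicalSystem (N : ℕ) (A Φp Φm : ℂ → Matrix (Fin N) (Fin N) ℂ)
    (k : Fin N → ℤ) : Prop :=
  (∀ i j, ContinuousOn (fun ζ => Φp ζ i j) (closedBall 0 1)) ∧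
  (∀ i j, DifferentiableOn ℂ (fun ζ => Φp ζ i j) (ball 0 1)) ∧
  (∀ ζ ∈ closedBall (0 : ℂ) 1, IsUnit (Φp ζ)) ∧
  (∀ i j, ContinuousOn (fun ζ => Φm ζ i j) {z : ℂ | 1 ≤ ‖z‖}) ∧
  (∀ i j, DifferentiableOn ℂ (fun ζ => Φm ζ i j) {z : ℂ | 1 < ‖z‖}) ∧
  (∀ ζ : ℂ, 1 ≤ ‖ζ‖ → IsUnit (Φm ζ)) ∧
  (∀ ζ : ℂ, ‖ζ‖ = 1 → Φp ζ = A ζ * Φm ζ) ∧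
  (∀ j, HasOrderAtInfty (fun z => (fun i => Φm z i j : Fin N → ℂ)) (k j)) ∧
  HasOrderAtInfty (fun z => (Φm z).det) (∑ j, k j)

/-!
If `k r < l r`, consider the transition matrix `C = (Φ⁺)⁻¹ Ψ⁺ = (Φ⁻)⁻¹ Ψ⁻`, holomorphic inside and
outside the unit circle and continuous up to it from both sides. By Cramer's rule and the orders at
infinity, the entry `C i j` is `O(z ^ (k i - l j))`, so for `i ≥ r ≥ j` it tends to `0` at infinity.
A function holomorphic outside the disc, vanishing at infinity, whose boundary values extend
holomorphically into the disc is zero (its Cauchy integral over large circles equals that over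
the unit circle, which vanishes). Hence `C` has a zero block of size `(N - r) × (r + 1)`, forcing
`det C = 0`, which contradicts invertibility.
-/

open Set Filter Topology Asymptotics Complex Bornology Real

section CauchyIntegral

variable {E : Type*} [NormedAddCommGroup E] [NormedSpace ℂ E]

theorem circleIntegral_sub_inv_smul_eq_zero_of_notMem_closedBall {c w : ℂ} {R : ℝ} {f : ℂ → E}
    (hR : 0 ≤ R) (hc : ContinuousOn f (closedBall c R)) (hd : DifferentiableOn ℂ f (ball c R))
    (hw : w ∉ closedBall c R) : (∮ z in C(c, R), (z - w)⁻¹ • f z) = 0 := by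
  have hne : ∀ z ∈ closedBall c R, z - w ≠ 0 := fun z hz =>
    sub_ne_zero.2 (ne_of_mem_of_not_mem hz hw)
  refine circleIntegral_eq_zero_of_differentiable_on_off_countable hR countable_empty
    (((continuousOn_id.sub continuousOn_const).inv₀ hne).smul hc) fun z hz => ?_
  exact ((differentiableAt_id.sub_const w).inv (hne z (ball_subset_closedBall hz.1))).smul
    (hd.differentiableAt (isOpen_ball.mem_nhds hz.1))

theorem tendsto_circleIntegral_sub_inv_smul_atTop {c w : ℂ} {f : ℂ → E}
    (hf : Tendsto f (cobounded ℂ) (𝓝 0)) :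
    Tendsto (fun R => ∮ z in C(c, R), (z - w)⁻¹ • f z) atTop (𝓝 0) := by
  rw [NormedAddGroup.tendsto_nhds_zero]
  intro ε hε
  obtain ⟨S, -, hS⟩ := (hasBasis_cobounded_compl_closedBall c).eventually_iff.1
    ((tendsto_zero_iff_norm_tendsto_zero.1 hf).eventually
      (ge_mem_nhds (show 0 < ε / (8 * π) by positivity)))
  filter_upwards [eventually_gt_atTop S, eventually_ge_atTop (2 * ‖w - c‖),
    eventually_gt_atTop 0] with R hRS hRw hR0
  have hbound : ∀ z ∈ sphere c R, ‖(z - w)⁻¹ • f z‖ ≤ 2 / R * (ε / (8 * π)) := by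
    intro z hz
    have hzc : ‖z - c‖ = R := mem_sphere_iff_norm.1 hz
    have hzw : R / 2 ≤ ‖z - w‖ := by
      have := norm_sub_norm_le (z - c) (w - c)
      rw [sub_sub_sub_cancel_right] at this
      linarith
    have hfz : ‖f z‖ ≤ ε / (8 * π) :=
      hS fun h => (not_le.2 hRS) (hzc ▸ mem_closedBall_iff_norm.1 h)
    rw [norm_smul, norm_inv]
    gcongr
    calc ‖z - w‖⁻¹ ≤ (R / 2)⁻¹ := inv_anti₀ (by positivity) hzw
      _ = 2 / R := inv_div R 2
  calc ‖∮ z in C(c, R), (z - w)⁻¹ • f z‖ ≤ 2 * π * R * (2 / R * (ε / (8 * π))) :=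
        circleIntegral.norm_integral_le_of_norm_le_const hR0.le hbound
    _ = ε / 2 := by field_simp; ring
    _ < ε := half_lt_self hε

variable [CompleteSpace E]

theorem circleIntegral_sub_inv_smul_eq_dslope {c w : ℂ} {R : ℝ} {f : ℂ → E} (hR : 0 ≤ R)
    (hw : w ∉ sphere c R) (hc : ContinuousOn f (sphere c R)) :
    (∮ z in C(c, R), (z - w)⁻¹ • f z)
      = (∮ z in C(c, R), dslope f w z) + (∮ z in C(c, R), (z - w)⁻¹) • f w := by
  have hne : ∀ z ∈ sphere c R, z - w ≠ 0 := fun z hz =>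
    sub_ne_zero.2 (ne_of_mem_of_not_mem hz hw)
  have hinv : ContinuousOn (fun z => (z - w)⁻¹) (sphere c R) :=
    (continuousOn_id.sub continuousOn_const).inv₀ hne
  have hslope : ContinuousOn (dslope f w) (sphere c R) := fun z hz =>
    (continuousWithinAt_dslope_of_ne (ne_of_mem_of_not_mem hz hw)).2 (hc z hz)
  calc (∮ z in C(c, R), (z - w)⁻¹ • f z)
      = ∮ z in C(c, R), dslope f w z + (z - w)⁻¹ • f w := by
        refine circleIntegral.integral_congr hR fun z hz => ?_
        rw [dslope_of_ne f (ne_of_mem_of_not_mem hz hw), slope_def_module, smul_sub,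
          sub_add_cancel]
    _ = _ := by
        rw [circleIntegral.integral_add (g := fun z => (z - w)⁻¹ • f w)
          (hslope.circleIntegrable hR) ((hinv.smul continuousOn_const).circleIntegrable hR),
          circleIntegral.integral_smul_const]

theorem circleIntegral_sub_inv_smul_of_differentiable_on_annulus {c w : ℂ} {r R : ℝ}
    {f : ℂ → E} (hr : 0 < r) (hwr : w ∉ closedBall c r) (hwR : w ∈ ball c R)
    (hc : ContinuousOn f (closedBall c R \ ball c r))
    (hd : DifferentiableOn ℂ f (ball c R \ closedBall c r)) :
    (∮ z in C(c, R), (z - w)⁻¹ • f z)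
      = (∮ z in C(c, r), (z - w)⁻¹ • f z) + (2 * π * I : ℂ) • f w := by
  have hopen : IsOpen (ball c R \ closedBall c r) := isOpen_ball.sdiff isClosed_closedBall
  have hw : w ∈ ball c R \ closedBall c r := ⟨hwR, hwr⟩
  have hrR : r ≤ R := by
    have := mem_ball.1 hwR
    have := not_le.1 (mt mem_closedBall.2 hwr)
    linarith
  have hsub : ball c R \ closedBall c r ⊆ closedBall c R \ ball c r :=
    sdiff_subset_sdiff ball_subset_closedBall ball_subset_closedBall
  -- `dslope f w` has a removable singularity at `w`, so it is holomorphic on the whole annulus.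
  have hslope : (∮ z in C(c, R), dslope f w z) = ∮ z in C(c, r), dslope f w z := by
    refine circleIntegral_eq_of_differentiable_on_annulus_off_countable hr hrR
      (countable_singleton w) ((continuousOn_dslope (mem_of_superset (hopen.mem_nhds hw) hsub)).2
        ⟨hc, hd.differentiableAt (hopen.mem_nhds hw)⟩) fun z hz => ?_
    exact (differentiableAt_dslope_of_ne hz.2).2 (hd.differentiableAt (hopen.mem_nhds hz.1))
  have hwR' : w ∉ sphere c R := fun h => (ne_of_lt (mem_ball.1 hwR)) (mem_sphere.1 h)
  have hwr' : w ∉ sphere c r := fun h => hwr (sphere_subset_closedBall h)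
  have hsphR : sphere c R ⊆ closedBall c R \ ball c r := fun z hz =>
    ⟨sphere_subset_closedBall hz, by
      simp only [mem_ball, not_lt, mem_sphere.1 hz, hrR]⟩
  have hsphr : sphere c r ⊆ closedBall c R \ ball c r := fun z hz =>
    ⟨closedBall_subset_closedBall hrR (sphere_subset_closedBall hz), by
      simp only [mem_ball, not_lt, mem_sphere.1 hz, le_refl]⟩
  have hinv_r : (∮ z in C(c, r), (z - w)⁻¹) = 0 := by
    simpa using circleIntegral_sub_inv_smul_eq_zero_of_notMem_closedBall hr.le
      (continuousOn_const (c := (1 : ℂ))) (differentiableOn_const 1) hwr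
  rw [circleIntegral_sub_inv_smul_eq_dslope (hr.trans_le hrR).le hwR' (hc.mono hsphR),
    circleIntegral_sub_inv_smul_eq_dslope hr.le hwr' (hc.mono hsphr), hslope,
    circleIntegral.integral_sub_inv_of_mem_ball hwR, hinv_r, zero_smul, add_zero]

theorem eqOn_zero_of_tendsto_cobounded {c : ℂ} {r : ℝ} {fp fm : ℂ → E} (hr : 0 < r)
    (hpc : ContinuousOn fp (closedBall c r)) (hpd : DifferentiableOn ℂ fp (ball c r))
    (hmc : ContinuousOn fm (ball c r)ᶜ) (hmd : DifferentiableOn ℂ fm (closedBall c r)ᶜ)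
    (heq : EqOn fp fm (sphere c r)) (hlim : Tendsto fm (cobounded ℂ) (𝓝 0)) :
    EqOn fm 0 (closedBall c r)ᶜ := by
  intro w hw
  have hinner : (∮ z in C(c, r), (z - w)⁻¹ • fm z) = 0 := by
    rw [← circleIntegral_sub_inv_smul_eq_zero_of_notMem_closedBall hr.le hpc hpd hw]
    exact circleIntegral.integral_congr hr.le fun z hz => by simp only [heq hz]
  have hconst : ∀ᶠ R in atTop, (∮ z in C(c, R), (z - w)⁻¹ • fm z) = (2 * π * I : ℂ) • fm w := by
    filter_upwards [eventually_gt_atTop (dist w c)] with R hR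
    rw [circleIntegral_sub_inv_smul_of_differentiable_on_annulus hr hw (mem_ball.2 hR)
      (hmc.mono (sdiff_subset_compl _ _)) (hmd.mono (sdiff_subset_compl _ _)), hinner, zero_add]
  have h2πI : (2 * π * I : ℂ) • fm w = 0 :=
    tendsto_nhds_unique (tendsto_const_nhds.congr' (hconst.mono fun _ h => h.symm))
      (tendsto_circleIntegral_sub_inv_smul_atTop hlim)
  exact (smul_eq_zero.1 h2πI).resolve_left two_pi_I_ne_zero

end CauchyIntegral

section MatrixLemmas

variable {n : Type*} [Fintype n] [DecidableEq n]

theorem Matrix.det_eq_zero_of_zero_block {R : Type*} [CommRing R] (M : Matrix n n R)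
    (I J : Finset n) (hcard : Fintype.card n < I.card + J.card)
    (hzero : ∀ i ∈ I, ∀ j ∈ J, M i j = 0) : M.det = 0 := by
  rw [Matrix.det_apply]
  refine Finset.sum_eq_zero fun σ _ => ?_
  obtain ⟨j, hj, hσj⟩ : ∃ j ∈ J, σ j ∈ I := by
    by_contra! h
    have hJ : J.card ≤ Iᶜ.card :=
      Finset.card_le_card_of_injOn σ (fun j hj => Finset.mem_compl.2 (h j hj)) σ.injective.injOn
    rw [Finset.card_compl] at hJ
    have := Finset.card_le_univ I
    omega
  exact smul_eq_zero_of_right _ (Finset.prod_eq_zero (Finset.mem_univ j) (hzero _ hσj _ hj))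

theorem Matrix.inv_mul_apply_eq_inv_det_mul_det_updateCol {K : Type*} [Field K]
    (P Q : Matrix n n K) (i j : n) :
    (P⁻¹ * Q) i j = (P.det)⁻¹ * (P.updateCol i fun a => Q a j).det := by
  rw [Matrix.inv_def, Matrix.smul_mul, Matrix.smul_apply, Ring.inverse_eq_inv, smul_eq_mul,
    ← Matrix.cramer_apply, Matrix.cramer_eq_adjugate_mulVec]
  rfl

theorem ContinuousOn.matrix_det {X R : Type*} [TopologicalSpace X] [CommRing R]
    [TopologicalSpace R] [IsTopologicalRing R] {M : X → Matrix n n R} {s : Set X}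
    (h : ∀ i j, ContinuousOn (fun x => M x i j) s) : ContinuousOn (fun x => (M x).det) s := by
  simp only [Matrix.det_apply']
  exact continuousOn_finsetSum _ fun σ _ =>
    continuousOn_const.mul (continuousOn_finsetProd _ fun i _ => h (σ i) i)

theorem DifferentiableOn.matrix_det {𝕜 : Type*} [NontriviallyNormedField 𝕜]
    {M : 𝕜 → Matrix n n 𝕜} {s : Set 𝕜}
    (h : ∀ i j, DifferentiableOn 𝕜 (fun x => M x i j) s) :
    DifferentiableOn 𝕜 (fun x => (M x).det) s := by
  simp only [Matrix.det_apply']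
  exact DifferentiableOn.fun_sum fun σ _ =>
    (DifferentiableOn.fun_finsetProd (u := Finset.univ) fun i _ => h (σ i) i).const_mul _

theorem Asymptotics.IsBigO.matrix_det {α R 𝕜 : Type*} [NormedCommRing R] [NormedField 𝕜]
    {l : Filter α} {M : α → Matrix n n R} {g : n → α → 𝕜}
    (h : ∀ i j, (fun x => M x i j) =O[l] g j) :
    (fun x => (M x).det) =O[l] fun x => ∏ j, g j x := by
  simp only [Matrix.det_apply']
  exact IsBigO.fun_sum fun σ _ => (IsBigO.finsetProd fun j _ => h (σ j) j).const_mul_left _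

variable {𝕜 : Type*}

theorem ContinuousOn.inv_mul_apply [NormedField 𝕜] {X : Type*} [TopologicalSpace X]
    {P Q : X → Matrix n n 𝕜} {s : Set X} (hP : ∀ a b, ContinuousOn (fun x => P x a b) s)
    (hQ : ∀ a b, ContinuousOn (fun x => Q x a b) s) (hunit : ∀ x ∈ s, IsUnit (P x)) (i j : n) :
    ContinuousOn (fun x => ((P x)⁻¹ * Q x) i j) s := by
  simp only [Matrix.inv_mul_apply_eq_inv_det_mul_det_updateCol]
  refine ((ContinuousOn.matrix_det hP).inv₀ fun x hx =>
    ((Matrix.isUnit_iff_isUnit_det _).1 (hunit x hx)).ne_zero).mul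
    (ContinuousOn.matrix_det fun a b => ?_)
  simp only [Matrix.updateCol_apply]
  split_ifs
  exacts [hQ a j, hP a b]

theorem DifferentiableOn.inv_mul_apply [NontriviallyNormedField 𝕜] {P Q : 𝕜 → Matrix n n 𝕜}
    {s : Set 𝕜} (hP : ∀ a b, DifferentiableOn 𝕜 (fun x => P x a b) s)
    (hQ : ∀ a b, DifferentiableOn 𝕜 (fun x => Q x a b) s) (hunit : ∀ x ∈ s, IsUnit (P x))
    (i j : n) : DifferentiableOn 𝕜 (fun x => ((P x)⁻¹ * Q x) i j) s := by
  simp only [Matrix.inv_mul_apply_eq_inv_det_mul_det_updateCol]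
  refine ((DifferentiableOn.matrix_det hP).inv fun x hx =>
    ((Matrix.isUnit_iff_isUnit_det _).1 (hunit x hx)).ne_zero).mul
    (DifferentiableOn.matrix_det fun a b => ?_)
  simp only [Matrix.updateCol_apply]
  split_ifs
  exacts [hQ a j, hP a b]

end MatrixLemmas

theorem Finset.prod_zpow_eq_zpow_sum {ι G₀ : Type*} [CommGroupWithZero G₀] {a : G₀} (ha : a ≠ 0)
    (s : Finset ι) (f : ι → ℤ) : ∏ i ∈ s, a ^ f i = a ^ ∑ i ∈ s, f i := by
  induction s using Finset.cons_induction with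
  | empty => simp
  | cons i s hi ih => rw [Finset.prod_cons, Finset.sum_cons, zpow_add₀ ha, ih]

theorem tendsto_zpow_cobounded_nhds_zero {𝕜 : Type*} [NormedField 𝕜] {m : ℤ} (hm : m < 0) :
    Tendsto (fun z : 𝕜 => z ^ m) (cobounded 𝕜) (𝓝 0) := by
  rw [tendsto_zero_iff_norm_tendsto_zero]
  simpa only [norm_zpow, Function.comp_def] using
    (tendsto_zpow_atTop_zero hm).comp tendsto_norm_cobounded_atTop

namespace HasOrderAtInfty

variable {E : Type*} [NormedAddCommGroup E] [NormedSpace ℂ E]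

theorem exists_eventuallyEq {h : ℂ → E} {k : ℤ} (H : HasOrderAtInfty h k) :
    ∃ g : ℂ → E, Tendsto (fun z => g z⁻¹) (cobounded ℂ) (𝓝 (g 0)) ∧ g 0 ≠ 0 ∧
      h =ᶠ[cobounded ℂ] fun z => z ^ (-k) • g z⁻¹ := by
  obtain ⟨r, hr, g, hg, hg0, hh⟩ := H
  have hgc : ContinuousAt g 0 :=
    (hg.differentiableAt (isOpen_ball.mem_nhds (mem_ball_self hr))).continuousAt
  exact ⟨g, hgc.tendsto.comp tendsto_inv₀_cobounded, hg0,
    (tendsto_norm_cobounded_atTop.eventually_gt_atTop r⁻¹).mono hh⟩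

theorem isBigO {h : ℂ → E} {k : ℤ} (H : HasOrderAtInfty h k) :
    h =O[cobounded ℂ] fun z => z ^ (-k) := by
  obtain ⟨g, hg, -, hh⟩ := H.exists_eventuallyEq
  simpa using ((isBigO_refl (fun z : ℂ => z ^ (-k)) _).smul (hg.isBigO_one ℂ)).congr' hh.symm
    EventuallyEq.rfl

theorem inv_isBigO {h : ℂ → ℂ} {k : ℤ} (H : HasOrderAtInfty h k) :
    (fun z => (h z)⁻¹) =O[cobounded ℂ] fun z => z ^ k := by
  obtain ⟨g, hg, hg0, hh⟩ := H.exists_eventuallyEq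
  refine ((isBigO_refl (fun z : ℂ => z ^ k) _).mul ((hg.inv₀ hg0).isBigO_one ℂ)).congr' ?_ ?_
  · filter_upwards [hh] with z hz
    rw [hz, smul_eq_mul, mul_inv, zpow_neg, inv_inv]
  · simp only [mul_one]; rfl

theorem isBigO_apply {ι : Type*} [Fintype ι] {h : ℂ → ι → ℂ} {k : ℤ} (H : HasOrderAtInfty h k)
    (a : ι) : (fun z => h z a) =O[cobounded ℂ] fun z => z ^ (-k) :=
  (isBigO_of_le _ fun z => norm_le_pi_norm (h z) a).trans H.isBigO

end HasOrderAtInfty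

theorem isBigO_inv_mul_apply {n : Type*} [Fintype n] [DecidableEq n] {P Q : ℂ → Matrix n n ℂ}
    {k : n → ℤ} {l : ℤ} {i j : n} (hP : ∀ c, HasOrderAtInfty (fun z => fun a => P z a c) (k c))
    (hdet : HasOrderAtInfty (fun z => (P z).det) (∑ c, k c))
    (hQ : HasOrderAtInfty (fun z => fun a => Q z a j) l) :
    (fun z => ((P z)⁻¹ * Q z) i j) =O[cobounded ℂ] fun z => z ^ (k i - l) := by
  -- the orders of the columns of `P` with column `i` replaced by column `j` of `Q`
  set e : n → ℤ := fun c => -k c + if c = i then k i - l else 0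
  have hcols : ∀ a b, (fun z => ((P z).updateCol i fun a => Q z a j) a b)
      =O[cobounded ℂ] fun z => z ^ e b := by
    intro a b
    simp only [Matrix.updateCol_apply, e]
    split_ifs with hb
    · convert hQ.isBigO_apply a using 3
      rw [hb]; ring
    · simpa using (hP b).isBigO_apply a
  have hsum : ∑ c, k c + ∑ c, e c = k i - l := by simp [e, Finset.sum_add_distrib]
  simp only [Matrix.inv_mul_apply_eq_inv_det_mul_det_updateCol]
  refine (hdet.inv_isBigO.mul (IsBigO.matrix_det hcols)).congr' EventuallyEq.rfl ?_
  filter_upwards [eventually_ne_cobounded 0] with z hz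
  rw [Finset.prod_zpow_eq_zpow_sum hz, ← zpow_add₀ hz, hsum]

namespace CanonicalSystem

variable {N : ℕ} {A Φp Φm Ψp Ψm : ℂ → Matrix (Fin N) (Fin N) ℂ} {k l : Fin N → ℤ}

theorem inv_mul_eq_of_norm_eq_one (hΦ : CanonicalSystem N A Φp Φm k)
    (hΨ : CanonicalSystem N A Ψp Ψm l) {ζ : ℂ} (hζ : ‖ζ‖ = 1) :
    (Φp ζ)⁻¹ * Ψp ζ = (Φm ζ)⁻¹ * Ψm ζ := by
  obtain ⟨-, -, hpu, -, -, hmu, hrel, -, -⟩ := hΦ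
  obtain ⟨-, -, -, -, -, -, hrel', -, -⟩ := hΨ
  have hp := (Matrix.isUnit_iff_isUnit_det _).1 (hpu ζ (mem_closedBall_zero_iff.2 hζ.le))
  have hm := (Matrix.isUnit_iff_isUnit_det _).1 (hmu ζ hζ.ge)
  have hA : A ζ = Φp ζ * (Φm ζ)⁻¹ := by
    rw [hrel ζ hζ, Matrix.mul_assoc, Matrix.mul_nonsing_inv _ hm, Matrix.mul_one]
  rw [hrel' ζ hζ, hA, Matrix.mul_assoc (Φp ζ), ← Matrix.mul_assoc (Φp ζ)⁻¹,
    Matrix.nonsing_inv_mul _ hp, Matrix.one_mul]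

theorem inv_mul_apply_eq_zero (hΦ : CanonicalSystem N A Φp Φm k)
    (hΨ : CanonicalSystem N A Ψp Ψm l) {i j : Fin N} (hij : k i < l j) {w : ℂ} (hw : 1 < ‖w‖) :
    ((Φm w)⁻¹ * Ψm w) i j = 0 := by
  have hsphere : EqOn (fun z => ((Φp z)⁻¹ * Ψp z) i j) (fun z => ((Φm z)⁻¹ * Ψm z) i j)
      (sphere 0 1) := fun ζ hζ => by
    simp only [inv_mul_eq_of_norm_eq_one hΦ hΨ (mem_sphere_zero_iff_norm.1 hζ)]
  obtain ⟨hpc, hpd, hpu, hmc, hmd, hmu, -, hcol, hdet⟩ := hΦ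
  obtain ⟨hqc, hqd, -, hnc, hnd, -, -, hcol', -⟩ := hΨ
  have hext : (ball (0 : ℂ) 1)ᶜ = {z | 1 ≤ ‖z‖} := by ext; simp
  have hext' : (closedBall (0 : ℂ) 1)ᶜ = {z | 1 < ‖z‖} := by ext; simp
  have hzero := eqOn_zero_of_tendsto_cobounded (fp := fun z => ((Φp z)⁻¹ * Ψp z) i j) one_pos
    (ContinuousOn.inv_mul_apply hpc hqc hpu i j)
    (DifferentiableOn.inv_mul_apply hpd hqd (fun z hz => hpu z (ball_subset_closedBall hz)) i j)
    (hext ▸ ContinuousOn.inv_mul_apply hmc hnc hmu i j)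
    (hext' ▸ DifferentiableOn.inv_mul_apply hmd hnd (fun z hz => hmu z hz.le) i j)
    hsphere
    ((isBigO_inv_mul_apply hcol hdet (hcol' j)).trans_tendsto
      (tendsto_zpow_cobounded_nhds_zero (by omega)))
  simpa using hzero (show w ∈ (closedBall (0 : ℂ) 1)ᶜ by simpa using hw)

theorem partialIndex_le (hΦ : CanonicalSystem N A Φp Φm k) (hΨ : CanonicalSystem N A Ψp Ψm l)
    (hk : Antitone k) (hl : Antitone l) (r : Fin N) : l r ≤ k r := by
  by_contra! hlt
  have h2 : (1 : ℝ) < ‖(2 : ℂ)‖ := by norm_num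
  have hblock : ∀ i ∈ Finset.Ici r, ∀ j ∈ Finset.Iic r, ((Φm 2)⁻¹ * Ψm 2) i j = 0 :=
    fun i hi j hj => inv_mul_apply_eq_zero hΦ hΨ
      ((hk (Finset.mem_Ici.1 hi)).trans_lt (hlt.trans_le (hl (Finset.mem_Iic.1 hj)))) h2
  have hdet := Matrix.det_eq_zero_of_zero_block _ _ _
    (by simp only [Fintype.card_fin, Fin.card_Ici, Fin.card_Iic]; omega) hblock
  rw [Matrix.det_mul, Matrix.det_nonsing_inv, Ring.inverse_eq_inv] at hdet
  obtain ⟨-, -, -, -, -, hmu, -⟩ := hΦ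
  obtain ⟨-, -, -, -, -, hnu, -⟩ := hΨ
  have hΦ2 := (Matrix.isUnit_iff_isUnit_det _).1 (hmu 2 h2.le)
  have hΨ2 := (Matrix.isUnit_iff_isUnit_det _).1 (hnu 2 h2.le)
  exact mul_ne_zero (inv_ne_zero hΦ2.ne_zero) hΨ2.ne_zero hdet

end CanonicalSystem

theorem partial_indices_independent_of_canonical_system_general (N : ℕ)
    (A : ℂ → Matrix (Fin N) (Fin N) ℂ)
    (Φp Φm Ψp Ψm : ℂ → Matrix (Fin N) (Fin N) ℂ)
    (k l : Fin N → ℤ)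
    (hΦ : CanonicalSystem N A Φp Φm k)
    (hΨ : CanonicalSystem N A Ψp Ψm l)
    (hk : Antitone k) (hl : Antitone l) :
    k = l :=
  funext fun r => le_antisymm (hΨ.partialIndex_le hΦ hl hk r) (hΦ.partialIndex_le hΨ hk hl r)

/-- Uniqueness of partial indices: two canonical systems for the same continuous
invertible symbol `A` on the unit circle have the same (decreasingly ordered)
partial indices. -/
theorem partial_indices_independent_of_canonical_system (N : ℕ)
    (A : ℂ → Matrix (Fin N) (Fin N) ℂ)
    (hA : ∀ i j, ContinuousOn (fun ζ => A ζ i j) (sphere 0 1))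
    (hAinv : ∀ ζ ∈ sphere (0 : ℂ) 1, IsUnit (A ζ))
    (Φp Φm Ψp Ψm : ℂ → Matrix (Fin N) (Fin N) ℂ)
    (k l : Fin N → ℤ)
    (hΦ : CanonicalSystem N A Φp Φm k)
    (hΨ : CanonicalSystem N A Ψp Ψm l)
    (hk : Antitone k) (hl : Antitone l) :
    k = l :=
  partial_indices_independent_of_canonical_system_general N A Φp Φm Ψp Ψm k l hΦ hΨ hk hl
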